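/- Let n ≥ 2 and let i ∈ I_n with e(i) ≠ 0 in the cyclotomic KLR algebra R_n. Then y_n² e(i) = 0 in R_n. -/

import Mathlib

open scoped BigOperators

/-- `I_n`: the sequences `(i_1,…,i_n)` of elements of `ZMod n` that are permutations of
`(0,1,…,n−1)`, encoded as bijections `Fin n → ZMod n` (position `k : Fin n` is the
0-based version of the paper's position `k+1`). -/
def KLRSeq (n : ℕ) : Type := {f : Fin n → ZMod n // Function.Bijective f}

instance (n : ℕ) : Finite (KLRSeq n) := by
  unfold KLRSeq
  rcases Nat.eq_zero_or_pos n with h | h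
  · subst h
    have : IsEmpty {f : Fin 0 → ZMod 0 // Function.Bijective f} := by
      constructor
      rintro ⟨f, hf⟩
      obtain ⟨x, -⟩ := hf.2 0
      exact x.elim0
    infer_instance
  · haveI : NeZero n := ⟨by omega⟩
    infer_instance

noncomputable instance (n : ℕ) : Fintype (KLRSeq n) := Fintype.ofFinite _

noncomputable instance (n : ℕ) : DecidableEq (KLRSeq n) := Classical.decEq _

/-- Generators of the KLR algebra: idempotents `e(i)`, dots `y_k`, crossings `ψ_k`. -/
inductive KLRGen (n : ℕ) : Type
  | e : KLRSeq n → KLRGen n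
  | y : Fin n → KLRGen n
  | psi : Fin (n - 1) → KLRGen n

/-- The free algebra on the KLR generators. -/
abbrev KLRFree (K : Type) [Field K] (n : ℕ) := FreeAlgebra K (KLRGen n)

namespace KLR

/-- `e(i)` in the free algebra. -/
def E (K : Type) [Field K] {n : ℕ} (i : KLRSeq n) : KLRFree K n :=
  FreeAlgebra.ι K (KLRGen.e i)

/-- `y_k` in the free algebra. -/
def Y (K : Type) [Field K] {n : ℕ} (k : Fin n) : KLRFree K n :=
  FreeAlgebra.ι K (KLRGen.y k)

/-- `ψ_k` in the free algebra. -/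
def P (K : Type) [Field K] {n : ℕ} (k : Fin (n - 1)) : KLRFree K n :=
  FreeAlgebra.ι K (KLRGen.psi k)

/-- The first strand position crossed by `ψ_k`. -/
def pos0 {n : ℕ} (k : Fin (n - 1)) : Fin n := ⟨k.val, by have := k.isLt; omega⟩

/-- The second strand position crossed by `ψ_k`. -/
def pos1 {n : ℕ} (k : Fin (n - 1)) : Fin n := ⟨k.val + 1, by have := k.isLt; omega⟩

/-- The sequence `s_k · i`, with entries `k` and `k+1` swapped. -/
def swapSeq {n : ℕ} (k : Fin (n - 1)) (i : KLRSeq n) : KLRSeq n :=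
  ⟨i.1 ∘ Equiv.swap (pos0 k) (pos1 k), i.2.comp (Equiv.swap _ _).bijective⟩

/-- The right-hand side of the quadratic relation `ψ_k² e(i) = …`, depending on how the
colors `i_k` and `i_{k+1}` are related in the quiver of affine type A on `ZMod n`
(`a → b` iff `b = a + 1` and `a ≠ b + 1`, etc.). -/
noncomputable def quadTerm (K : Type) [Field K] {n : ℕ} (k : Fin (n - 1)) (i : KLRSeq n) :
    KLRFree K n :=
  let a := i.1 (pos0 k)
  let b := i.1 (pos1 k)
  if b = a + 1 ∧ a = b + 1 then
    (Y K (pos1 k) - Y K (pos0 k)) * ((Y K (pos0 k) - Y K (pos1 k)) * E K i)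
  else if b = a + 1 ∧ a ≠ b + 1 then (Y K (pos1 k) - Y K (pos0 k)) * E K i
  else if a = b + 1 ∧ b ≠ a + 1 then (Y K (pos0 k) - Y K (pos1 k)) * E K i
  else E K i

/-- The defining relations of the cyclotomic KLR algebra `R_n` (for `Λ = Λ_0`):
the KLR relations together with the cyclotomic relations `y_1 e(i) = 0` (if `i_1 = 0`) and
`e(i) = 0` (if `i_1 ≠ 0`). -/
inductive Rel (K : Type) [Field K] (n : ℕ) : KLRFree K n → KLRFree K n → Prop
  | idem (i j : KLRSeq n) : Rel K n (E K i * E K j) (if i = j then E K i else 0)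
  | sum_eq_one : Rel K n (∑ i : KLRSeq n, E K i) 1
  | ye (k : Fin n) (i : KLRSeq n) : Rel K n (Y K k * E K i) (E K i * Y K k)
  | psie (k : Fin (n - 1)) (i : KLRSeq n) :
      Rel K n (P K k * E K i) (E K (swapSeq k i) * P K k)
  | yy (k l : Fin n) : Rel K n (Y K k * Y K l) (Y K l * Y K k)
  | psiy (k : Fin (n - 1)) (l : Fin n) (h : l.val ≠ k.val ∧ l.val ≠ k.val + 1) :
      Rel K n (P K k * Y K l) (Y K l * P K k)
  | psipsi (k l : Fin (n - 1)) (h : k.val + 1 < l.val ∨ l.val + 1 < k.val) :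
      Rel K n (P K k * P K l) (P K l * P K k)
  | psiy1 (k : Fin (n - 1)) (i : KLRSeq n) :
      Rel K n (P K k * (Y K (pos1 k) * E K i)) (Y K (pos0 k) * (P K k * E K i))
  | ypsi (k : Fin (n - 1)) (i : KLRSeq n) :
      Rel K n (Y K (pos1 k) * (P K k * E K i)) (P K k * (Y K (pos0 k) * E K i))
  | sq (k : Fin (n - 1)) (i : KLRSeq n) :
      Rel K n (P K k * (P K k * E K i)) (quadTerm K k i)
  | braid (k : Fin (n - 1)) (h : k.val + 1 < n - 1) (i : KLRSeq n) :
      Rel K n (P K k * (P K ⟨k.val + 1, h⟩ * (P K k * E K i)))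
              (P K ⟨k.val + 1, h⟩ * (P K k * (P K ⟨k.val + 1, h⟩ * E K i)))
  | cyc0 (hn : 0 < n) (i : KLRSeq n) (h : i.1 ⟨0, hn⟩ = 0) :
      Rel K n (Y K ⟨0, hn⟩ * E K i) 0
  | cyc1 (hn : 0 < n) (i : KLRSeq n) (h : i.1 ⟨0, hn⟩ ≠ 0) :
      Rel K n (E K i) 0

end KLR

/-- The cyclotomic KLR algebra `R_n` (quiver of affine type A on `ZMod n`, `α` the sum of
all simple roots, `Λ = Λ_0`): the quotient of the free algebra on the generators by the
two-sided ideal generated by the relation differences and the cyclotomic generators. -/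
abbrev CKLR (K : Type) [Field K] (n : ℕ) := RingQuot (KLR.Rel K n)

namespace KLR

/-- The quotient map from the free algebra to `R_n`. -/
noncomputable def mk (K : Type) [Field K] (n : ℕ) : KLRFree K n →ₐ[K] CKLR K n :=
  RingQuot.mkAlgHom K (Rel K n)

/-- The idempotent `e(i)` in `R_n`. -/
noncomputable def e (K : Type) [Field K] {n : ℕ} (i : KLRSeq n) : CKLR K n := mk K n (E K i)

/-- The dot `y_k` in `R_n`. -/
noncomputable def y (K : Type) [Field K] {n : ℕ} (k : Fin n) : CKLR K n := mk K n (Y K k)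

/-- The crossing `ψ_k` in `R_n`. -/
noncomputable def p (K : Type) [Field K] {n : ℕ} (k : Fin (n - 1)) : CKLR K n := mk K n (P K k)

end KLR

/-
Call `a, b ∈ ℤ/n` adjacent if `b = a ± 1`, and let `s_k i` swap the entries `k, k+1` of `i`.
If a nonzero entry `i_k` is adjacent to no earlier entry, moving its strand to the left through
crossings of square one ends at the cyclotomic relation, so `e(i) = 0`. Hence when `e(i) ≠ 0`
every prefix of `i` is an arc of `ℤ/n`.

The relation `y_{k+1} ψ_k = ψ_k y_k` gives `y_{k+1} ψ_k² e(i) = ψ_k y_k e(s_k i) ψ_k`, which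
drives an induction proving `y_k e(i) = 0` for all `k ≤ n - 1` and all `i`. If `i_k, i_{k+1}`
are not adjacent, `ψ_k² e(i) = e(i)`. If they are, `i_{k+1}` is adjacent to no `i_l` with
`l < k`, since an arc of at most `n - 2` residues cannot contain both neighbours of a residue
outside it; so `e(s_k i) = 0` and `0 = ψ_k² e(i) = ±(y_{k+1} - y_k) e(i) = ±y_{k+1} e(i)`.

At the last strand the same identity only gives `y_n ψ_{n-1}² e(i) = 0`, where
`ψ_{n-1}² e(i) ∈ {e(i), ±y_n e(i)}`, whence `y_n² e(i) = 0`. For `n = 2` the quadratic relation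
reads `ψ_1² e(i) = -y_2² e(i)`, and one of `e(i), e(s_1 i)` vanishes by the cyclotomic relation.
-/

namespace KLR

def Adjacent {n : ℕ} (a b : ZMod n) : Prop := b = a + 1 ∨ a = b + 1

section Combinatorics

variable {n m : ℕ} {f : Fin m → ZMod n}

/-- For injective `f`, the residue sequences of standard tableaux of hook shape. -/
def IsHookSeq (f : Fin m → ZMod n) : Prop :=
  ∀ j, f j ≠ 0 → ∃ l < j, Adjacent (f l) (f j)

theorem IsHookSeq.apply_zero (hh : IsHookSeq f) (hm : 0 < m) : f ⟨0, hm⟩ = 0 := by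
  by_contra h
  obtain ⟨l, hl, -⟩ := hh _ h
  exact absurd hl (by simp [Fin.lt_def])

theorem IsHookSeq.apply_ne_zero (hf : Function.Injective f) (hh : IsHookSeq f) {j : Fin m}
    (hj : j.val ≠ 0) : f j ≠ 0 := fun hj0 =>
  hj (congrArg Fin.val (hf (hj0.trans (hh.apply_zero (by omega)).symm)))

theorem IsHookSeq.image_eq_Icc (hf : Function.Injective f) (hh : IsHookSeq f) {j : ℕ}
    (hj : j < m) : ∃ lo hi : ℤ, hi - lo = j ∧
      f '' {l | l.val ≤ j} = (Int.cast : ℤ → ZMod n) '' Set.Icc lo hi := by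
  induction j with
  | zero =>
    refine ⟨0, 0, rfl, ?_⟩
    have hl : {l : Fin m | l.val ≤ 0} = {⟨0, hj⟩} := by
      ext l; simp [Fin.ext_iff]
    rw [hl, Set.Icc_self, Set.image_singleton, Set.image_singleton, hh.apply_zero, Int.cast_zero]
  | succ j ih =>
    obtain ⟨lo, hi, hsize, himg⟩ := ih (by omega)
    set J : Fin m := ⟨j + 1, hj⟩
    have hprefix : {l : Fin m | l.val ≤ j + 1} = insert J {l | l.val ≤ j} := by
      ext l
      simp only [Set.mem_ofPred_eq, Set.mem_insert_iff, Fin.ext_iff, J]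
      omega
    have hnew : f J ∉ (Int.cast : ℤ → ZMod n) '' Set.Icc lo hi := by
      rw [← himg]
      rintro ⟨l, hl, hlJ⟩
      have := congrArg Fin.val (hf hlJ)
      simp only [Set.mem_ofPred_eq, J] at hl this
      omega
    have extend : ∀ v lo' hi' : ℤ, f J = v → hi' - lo' = j + 1 →
        Set.Icc lo' hi' = insert v (Set.Icc lo hi) → ∃ lo hi : ℤ, hi - lo = ↑(j + 1) ∧
          f '' {l | l.val ≤ j + 1} = (Int.cast : ℤ → ZMod n) '' Set.Icc lo hi :=
      fun v lo' hi' hv hsize' hIcc => ⟨lo', hi', by push_cast; exact hsize', by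
        rw [hprefix, Set.image_insert_eq, himg, hIcc, Set.image_insert_eq, hv]⟩
    obtain ⟨l, hlJ, hadj⟩ := hh J (hh.apply_ne_zero hf (by simp [J]))
    obtain ⟨c, hc, hcl⟩ : f l ∈ (Int.cast : ℤ → ZMod n) '' Set.Icc lo hi := by
      rw [← himg]
      exact ⟨l, by simp only [Fin.lt_def, Set.mem_ofPred_eq, J] at hlJ ⊢; omega, rfl⟩
    rcases hadj with hup | hdown
    · have hv : f J = ((c + 1 : ℤ) : ZMod n) := by rw [hup, ← hcl]; push_cast; rfl
      have hc' : c = hi := by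
        by_contra hne
        exact hnew ⟨c + 1, by simp only [Set.mem_Icc] at hc ⊢; omega, hv.symm⟩
      refine extend (c + 1) lo (hi + 1) hv (by omega) ?_
      ext x; simp only [Set.mem_Icc, Set.mem_insert_iff]; omega
    · have hv : f J = ((c - 1 : ℤ) : ZMod n) := by rw [Int.cast_sub, hcl, hdown]; ring
      have hc' : c = lo := by
        by_contra hne
        exact hnew ⟨c - 1, by simp only [Set.mem_Icc] at hc ⊢; omega, hv.symm⟩
      refine extend (c - 1) (lo - 1) hi hv (by omega) ?_
      ext x; simp only [Set.mem_Icc, Set.mem_insert_iff]; omega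

theorem IsHookSeq.eq_of_adjacent (hf : Function.Injective f) (hh : IsHookSeq f)
    {l l' j : Fin m} (hj : j.val + 2 ≤ n) (hl : l < j) (hl' : l' < j) (had : Adjacent (f l) (f j))
    (had' : Adjacent (f l') (f j)) : l = l' := by
  have no_gap : ∀ a b : Fin m, a < j → b < j → f j = f a + 1 → f b = f j + 1 → False := by
    intro a b ha hb hja hbj
    obtain ⟨lo, hi, hsize, himg⟩ := hh.image_eq_Icc hf (j := j.val - 1) (by omega)
    have mem : ∀ x : Fin m, x < j → ∃ c ∈ Set.Icc lo hi, (c : ZMod n) = f x := by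
      intro x hx
      rw [← Set.mem_image, ← himg]
      exact ⟨x, by simp only [Fin.lt_def] at hx; simp only [Set.mem_ofPred_eq]; omega, rfl⟩
    obtain ⟨c, hc, hca⟩ := mem a ha
    obtain ⟨d, hd, hdb⟩ := mem b hb
    have hdc : d = c + 2 := by
      have hdvd : (n : ℤ) ∣ d - (c + 2) := by
        rw [← ZMod.intCast_eq_intCast_iff_dvd_sub]; push_cast
        rw [hca, hdb, hbj, hja]; ring
      have := Int.eq_zero_of_abs_lt_dvd hdvd (by
        simp only [Set.mem_Icc] at hc hd; rw [abs_lt]; omega)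
      omega
    obtain ⟨x, hx, hxj⟩ : f j ∈ f '' {x | x.val ≤ j.val - 1} := by
      rw [himg]
      exact ⟨c + 1, by simp only [Set.mem_Icc] at hc hd ⊢; omega, by push_cast; rw [hca, hja]⟩
    have := congrArg Fin.val (hf hxj)
    simp only [Set.mem_ofPred_eq] at hx
    omega
  rcases had with h | h <;> rcases had' with h' | h'
  · exact hf (add_right_cancel (h.symm.trans h'))
  · exact (no_gap l l' hl hl' h h').elim
  · exact (no_gap l' l hl' hl h' h).elim
  · exact hf (h.trans h'.symm)

theorem not_eq_add_one_and_eq_add_one (hn : 3 ≤ n) (a b : ZMod n) :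
    ¬(b = a + 1 ∧ a = b + 1) := by
  rintro ⟨h₁, h₂⟩
  have h2 : ((2 : ℕ) : ZMod n) = 0 := by
    rw [h₁] at h₂
    push_cast
    linear_combination -h₂
  rw [ZMod.natCast_eq_zero_iff] at h2
  exact absurd (Nat.le_of_dvd two_pos h2) (by omega)

end Combinatorics

variable {K : Type} [Field K] {n : ℕ}

section Relations

theorem mk_eq_mk_of_rel {x z : KLRFree K n} (h : Rel K n x z) : mk K n x = mk K n z :=
  RingQuot.mkAlgHom_rel K h

theorem psi_mul_e (k : Fin (n - 1)) (i : KLRSeq n) :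
    p K k * e K i = e K (swapSeq k i) * p K k := by
  simp only [e, p, ← map_mul]
  exact mk_eq_mk_of_rel (Rel.psie k i)

theorem y_mul_y_comm (k l : Fin n) : y K k * y K l = y K l * y K k := by
  simp only [y, ← map_mul]
  exact mk_eq_mk_of_rel (Rel.yy k l)

theorem y_pos1_mul_psi_mul_e (k : Fin (n - 1)) (i : KLRSeq n) :
    y K (pos1 k) * (p K k * e K i) = p K k * (y K (pos0 k) * e K i) := by
  simp only [e, y, p, ← map_mul]
  exact mk_eq_mk_of_rel (Rel.ypsi k i)

theorem psi_mul_psi_mul_e (k : Fin (n - 1)) (i : KLRSeq n) :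
    p K k * (p K k * e K i) = mk K n (quadTerm K k i) := by
  simp only [e, p, ← map_mul]
  exact mk_eq_mk_of_rel (Rel.sq k i)

theorem y_zero_mul_e_eq_zero (hn : 0 < n) (i : KLRSeq n) (h : i.1 ⟨0, hn⟩ = 0) :
    y K ⟨0, hn⟩ * e K i = 0 := by
  simp only [e, y, ← map_mul]
  rw [mk_eq_mk_of_rel (Rel.cyc0 hn i h), map_zero]

theorem e_eq_zero_of_apply_zero_ne_zero (hn : 0 < n) (i : KLRSeq n) (h : i.1 ⟨0, hn⟩ ≠ 0) :
    e K i = 0 := by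
  rw [e, mk_eq_mk_of_rel (Rel.cyc1 hn i h), map_zero]

end Relations

theorem swapSeq_apply_pos0 (k : Fin (n - 1)) (i : KLRSeq n) :
    (swapSeq k i).1 (pos0 k) = i.1 (pos1 k) :=
  congrArg i.1 (Equiv.swap_apply_left _ _)

theorem swapSeq_apply_of_lt (k : Fin (n - 1)) (i : KLRSeq n) {l : Fin n} (hl : l < pos0 k) :
    (swapSeq k i).1 l = i.1 l := by
  refine congrArg i.1 (Equiv.swap_apply_of_ne_of_ne ?_ ?_) <;>
    simp only [Fin.lt_def, pos0] at hl <;> simp only [ne_eq, Fin.ext_iff, pos0, pos1] <;> omega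

section QuadraticRelation

variable (k : Fin (n - 1)) (i : KLRSeq n)

theorem psi_mul_psi_mul_e_of_not_adjacent (h : ¬Adjacent (i.1 (pos0 k)) (i.1 (pos1 k))) :
    p K k * (p K k * e K i) = e K i := by
  simp only [Adjacent, not_or] at h
  rw [psi_mul_psi_mul_e, quadTerm, if_neg (by tauto), if_neg (by tauto), if_neg (by tauto)]
  rfl

theorem y_pos1_mul_e_of_adjacent (hn : 3 ≤ n) (h : Adjacent (i.1 (pos0 k)) (i.1 (pos1 k)))
    (hy : y K (pos0 k) * e K i = 0) :
    y K (pos1 k) * e K i = p K k * (p K k * e K i) ∨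
      y K (pos1 k) * e K i = -(p K k * (p K k * e K i)) := by
  have hboth := not_eq_add_one_and_eq_add_one hn (i.1 (pos0 k)) (i.1 (pos1 k))
  rw [psi_mul_psi_mul_e, quadTerm, if_neg hboth]
  rcases h with h | h
  · left
    rw [if_pos ⟨h, fun h' => hboth ⟨h, h'⟩⟩, map_mul, map_sub]
    change _ = (y K (pos1 k) - y K (pos0 k)) * e K i
    rw [sub_mul, hy, sub_zero]
  · right
    rw [if_neg fun h' => hboth ⟨h'.1, h⟩, if_pos ⟨h, fun h' => hboth ⟨h', h⟩⟩, map_mul,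
      map_sub]
    change _ = -((y K (pos0 k) - y K (pos1 k)) * e K i)
    rw [sub_mul, hy, zero_sub, neg_neg]

theorem psi_mul_psi_mul_e_of_adjacent_of_adjacent
    (h₁ : i.1 (pos1 k) = i.1 (pos0 k) + 1) (h₂ : i.1 (pos0 k) = i.1 (pos1 k) + 1)
    (hy : y K (pos0 k) * e K i = 0) :
    p K k * (p K k * e K i) = -(y K (pos1 k) * (y K (pos1 k) * e K i)) := by
  have hy₀ : (y K (pos0 k) - y K (pos1 k)) * e K i = -(y K (pos1 k) * e K i) := by
    rw [sub_mul, hy, zero_sub]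
  have hy₀₁ : y K (pos0 k) * (y K (pos1 k) * e K i) = 0 := by
    rw [← mul_assoc, y_mul_y_comm, mul_assoc, hy, mul_zero]
  rw [psi_mul_psi_mul_e, quadTerm, if_pos ⟨h₁, h₂⟩]
  simp only [map_mul, map_sub]
  change (y K (pos1 k) - y K (pos0 k)) * ((y K (pos0 k) - y K (pos1 k)) * e K i) = _
  rw [hy₀, sub_mul, mul_neg (y K (pos1 k)), mul_neg (y K (pos0 k)), hy₀₁, neg_zero, sub_zero]

theorem y_pos1_mul_psi_mul_psi_mul_e :
    y K (pos1 k) * (p K k * (p K k * e K i)) =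
      p K k * (y K (pos0 k) * e K (swapSeq k i)) * p K k := by
  rw [psi_mul_e k i, ← mul_assoc (p K k), ← mul_assoc, y_pos1_mul_psi_mul_e, mul_assoc]

theorem psi_mul_psi_mul_e_eq_zero (h : e K (swapSeq k i) = 0) :
    p K k * (p K k * e K i) = 0 := by
  rw [psi_mul_e, h, zero_mul, mul_zero]

end QuadraticRelation

theorem e_eq_zero_of_forall_lt_not_adjacent (i : KLRSeq n) (j : Fin n) (hj : i.1 j ≠ 0)
    (h : ∀ l < j, ¬Adjacent (i.1 l) (i.1 j)) : e K i = 0 := by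
  obtain ⟨j, hjn⟩ := j
  induction j generalizing i with
  | zero => exact e_eq_zero_of_apply_zero_ne_zero hjn i hj
  | succ j ih =>
    let k : Fin (n - 1) := ⟨j, by omega⟩
    have hk : pos0 k < pos1 k := by simp [Fin.lt_def, pos0, pos1]
    rw [← psi_mul_psi_mul_e_of_not_adjacent k i (h (pos0 k) hk)]
    refine psi_mul_psi_mul_e_eq_zero k i (ih (swapSeq k i) (by omega) ?_ fun l hl => ?_)
    · exact (swapSeq_apply_pos0 k i).trans_ne hj
    · change ¬Adjacent _ ((swapSeq k i).1 (pos0 k))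
      rw [swapSeq_apply_of_lt k i hl, swapSeq_apply_pos0]
      exact h l (lt_trans hl hk)

theorem isHookSeq_of_e_ne_zero {i : KLRSeq n} (hi : e K i ≠ 0) : IsHookSeq i.1 := by
  intro j hj
  by_contra h
  push Not at h
  exact hi (e_eq_zero_of_forall_lt_not_adjacent i j hj h)

theorem e_swapSeq_eq_zero_of_adjacent (k : Fin (n - 1)) (hk : k.val + 3 ≤ n) {i : KLRSeq n}
    (hi : e K i ≠ 0) (h : Adjacent (i.1 (pos0 k)) (i.1 (pos1 k))) : e K (swapSeq k i) = 0 := by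
  have hh := isHookSeq_of_e_ne_zero hi
  have hk01 : pos0 k < pos1 k := by simp [Fin.lt_def, pos0, pos1]
  refine e_eq_zero_of_forall_lt_not_adjacent _ (pos0 k) ?_ fun l hl hl' => ?_
  · rw [swapSeq_apply_pos0]
    exact hh.apply_ne_zero i.2.1 (by simp [pos1])
  · rw [swapSeq_apply_of_lt k i hl, swapSeq_apply_pos0] at hl'
    have := hh.eq_of_adjacent i.2.1 (by simp only [pos1]; omega) (lt_trans hl hk01) hk01 hl' h
    exact hl.ne this

theorem y_mul_e_eq_zero {k : ℕ} (hk : k + 2 ≤ n) (i : KLRSeq n) :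
    y K ⟨k, by omega⟩ * e K i = 0 := by
  induction k generalizing i with
  | zero =>
    by_cases h : i.1 ⟨0, by omega⟩ = 0
    · exact y_zero_mul_e_eq_zero _ i h
    · rw [e_eq_zero_of_apply_zero_ne_zero _ i h, mul_zero]
  | succ k ih =>
    let κ : Fin (n - 1) := ⟨k, by omega⟩
    change y K (pos1 κ) * e K i = 0
    by_cases h : Adjacent (i.1 (pos0 κ)) (i.1 (pos1 κ))
    · by_cases hi : e K i = 0
      · rw [hi, mul_zero]
      have hψ := psi_mul_psi_mul_e_eq_zero κ i (e_swapSeq_eq_zero_of_adjacent κ (by omega) hi h)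
      rcases y_pos1_mul_e_of_adjacent κ i (by omega) h (ih (by omega) i) with h' | h' <;>
        rw [h', hψ]
      exact neg_zero
    · have hs : y K (pos0 κ) * e K (swapSeq κ i) = 0 := ih (by omega) (swapSeq κ i)
      rw [← psi_mul_psi_mul_e_of_not_adjacent κ i h, y_pos1_mul_psi_mul_psi_mul_e, hs, mul_zero,
        zero_mul]

theorem y_pos0_mul_e_eq_zero (k : Fin (n - 1)) (i : KLRSeq n) : y K (pos0 k) * e K i = 0 :=
  y_mul_e_eq_zero (by have := k.isLt; omega) i

theorem y_pos1_mul_y_pos1_mul_e_eq_zero (hn : 3 ≤ n) (k : Fin (n - 1)) (i : KLRSeq n) :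
    y K (pos1 k) * (y K (pos1 k) * e K i) = 0 := by
  have hψ : y K (pos1 k) * (p K k * (p K k * e K i)) = 0 := by
    rw [y_pos1_mul_psi_mul_psi_mul_e, y_pos0_mul_e_eq_zero, mul_zero, zero_mul]
  by_cases h : Adjacent (i.1 (pos0 k)) (i.1 (pos1 k))
  · rcases y_pos1_mul_e_of_adjacent (K := K) k i hn h (y_pos0_mul_e_eq_zero k i) with h' | h' <;>
      rw [h']
    · exact hψ
    · rw [mul_neg (y K (pos1 k)), hψ, neg_zero]
  · rw [psi_mul_psi_mul_e_of_not_adjacent k i h] at hψ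
    rw [hψ, mul_zero]

theorem y_pos1_mul_y_pos1_mul_e_eq_zero_of_two (k : Fin (2 - 1)) (i : KLRSeq 2) :
    y K (pos1 k) * (y K (pos1 k) * e K i) = 0 := by
  have hk : pos0 k = ⟨0, two_pos⟩ := Fin.ext (by have := k.isLt; simp only [pos0]; omega)
  have hne : i.1 (pos0 k) ≠ i.1 (pos1 k) := fun h => by
    simpa [Fin.ext_iff, pos0, pos1] using i.2.1 h
  have hboth : ∀ a b : ZMod 2, a ≠ b → b = a + 1 ∧ a = b + 1 := by decide
  have hψ := psi_mul_psi_mul_e_of_adjacent_of_adjacent (K := K) k i (hboth _ _ hne).1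
    (hboth _ _ hne).2 (y_pos0_mul_e_eq_zero k i)
  by_cases h0 : i.1 (pos0 k) = 0
  · have hs : e K (swapSeq k i) = 0 := by
      refine e_eq_zero_of_apply_zero_ne_zero two_pos _ ?_
      rw [← hk, swapSeq_apply_pos0, ← h0]
      exact hne.symm
    rw [psi_mul_psi_mul_e_eq_zero k i hs] at hψ
    exact neg_eq_zero.mp hψ.symm
  · rw [e_eq_zero_of_apply_zero_ne_zero two_pos i (hk ▸ h0), mul_zero, mul_zero]

end KLR

/-- for `n ≥ 2` and `i ∈ I_n` with `e(i) ≠ 0` in `R_n`, `y_n² e(i) = 0`. -/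
theorem stmt_9 (K : Type) [Field K] (n : ℕ) (hn : 2 ≤ n) (i : KLRSeq n) :
    KLR.y K (⟨n - 1, by omega⟩ : Fin n) ^ 2 * KLR.e K i = 0 := by
  obtain ⟨k, hk⟩ : ∃ k : Fin (n - 1), KLR.pos1 k = ⟨n - 1, by omega⟩ :=
    ⟨⟨n - 2, by omega⟩, Fin.ext (by simp only [KLR.pos1]; omega)⟩
  rw [← hk, sq, mul_assoc]
  rcases hn.eq_or_lt with rfl | hn
  · exact KLR.y_pos1_mul_y_pos1_mul_e_eq_zero_of_two k i
  · exact KLR.y_pos1_mul_y_pos1_mul_e_eq_zero hn k i
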